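/- Soundness of the abstract pointer arithmetic table for the tail location: for every starting index i with 1 ≤ i ≤ S−1 and every integer offset n, the abstraction of the concrete result of adding n to lᵢ is contained in the abstract table entry for Tail at offset n, where the table (for S ≥ 4) maps: n ≤ −S ↦ {E⁻}; n = 1−S ↦ {E⁻, Head}; 2−S ≤ n ≤ −2 ↦ {E⁻, Head, Tail}; n = −1 ↦ {Head, Tail}; n = 0 ↦ {Tail}; n = 1 ↦ {Tail, Off}; 2 ≤ n ≤ S−2 ↦ {Tail, Off, E⁺}; n = S−1 ↦ {Off, E⁺}; n ≥ S ↦ {E⁺}. -/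
import Mathlib


inductive AbsOut where
  | Em | Head | Tail | Off | Ep
deriving DecidableEq

inductive CRes where
  | loc (k : ℤ)
  | under
  | over

/-- Concrete pointer arithmetic on an array allocation `[l₀,…,l_S]`:
adding offset `n` to index `i`. -/
def concAdd (S i n : ℤ) : CRes :=
  if i + n < 0 then .under else if S < i + n then .over else .loc (i + n)

/-- The abstraction function. -/
def absOf (S : ℤ) : CRes → AbsOut
  | .under => .Em
  | .over => .Ep
  | .loc k => if k = 0 then .Head else if k = S then .Off else .Tail

/-- The abstract table for the tail location (case `S ≥ 4`). -/
def tableTail (S n : ℤ) : Set AbsOut :=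
  if n ≤ -S then {.Em}
  else if n = 1 - S then {.Em, .Head}
  else if n ≤ -2 then {.Em, .Head, .Tail}
  else if n = -1 then {.Head, .Tail}
  else if n = 0 then {.Tail}
  else if n = 1 then {.Tail, .Off}
  else if n ≤ S - 2 then {.Tail, .Off, .Ep}
  else if n = S - 1 then {.Off, .Ep}
  else {.Ep}

/-- Soundness of the abstract pointer arithmetic table for the tail location:
for every starting index `i` with `1 ≤ i ≤ S−1` and every offset `n`, the
abstraction of the concrete result is contained in the table entry for `Tail`. -/
theorem tableTail_sound :
    ∀ S : ℤ, 4 ≤ S → ∀ i : ℤ, 1 ≤ i → i ≤ S - 1 → ∀ n : ℤ,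
      absOf S (concAdd S i n) ∈ tableTail S n := by
  intro S hS i hi1 hi2 n
  simp only [concAdd, absOf, tableTail]
  split_ifs <;>
    simp only [Set.mem_insert_iff, Set.mem_singleton_iff] <;>
    first
      | omega
      | tauto
      | (split_ifs <;> simp_all <;> omega)
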